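/- arXiv:2207.09926 — 2 statements merged into one kernel-verified Lean document; each statement's English description precedes it below -/
import Mathlib

section
/- The one-dimensional quadratic-phase Fourier transform Q_μ[f](w) = ∫_ℝ f(x) Λ_μ(x,w) dx is inverted by f(x) = ∫_ℝ Q_μ[f](w) conj(Λ_μ(x,w)) dw, for f ∈ L¹(ℝ) ∩ L²(ℝ) with Q_μ[f] ∈ L¹(ℝ), with equality almost everywhere. -/
open MeasureTheory Complex
open scoped ENNReal

noncomputable section

structure QP where
  a : ℝ
  b : ℝ
  c : ℝ
  d : ℝ
  e : ℝ

def phase (μ : QP) (x w : ℝ) : ℝ :=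
  μ.a * x^2 + μ.b * x * w + μ.c * w^2 + μ.d * x + μ.e * w

/-- principal square root in ℂ -/
def csqrt (z : ℂ) : ℂ := z ^ (1/2 : ℂ)

/-- quadratic-phase kernel Λ_μ(x,w) -/
def Λ (μ : QP) (x w : ℝ) : ℂ :=
  csqrt (μ.b * Complex.I / (2 * Real.pi)) * Complex.exp (-(phase μ x w) * Complex.I)

/-- one-dimensional quadratic-phase Fourier transform -/
def QPFT (μ : QP) (f : ℝ → ℂ) (w : ℝ) : ℂ :=
  ∫ x : ℝ, f x * Λ μ x w

/-!
The kernel factors as `Λ_μ(x,w) = K e^{-i(ax²+dx)} e^{-i(cw²+ew)} e^{-ibxw}` with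
`K = √(bi/2π)`, so `Q_μ f(w) = K e^{-i(cw²+ew)} 𝓕g(bw/2π)` for the chirped function
`g = e^{-i(ax²+dx)} f`. Integrating `Q_μ f` against `conj Λ_μ(x, ·)` cancels the chirp in `w`,
and the substitution `ξ = bw/2π` turns the integral into
`|K|² (2π/|b|) e^{i(ax²+dx)} 𝓕⁻(𝓕g)(x) = e^{i(ax²+dx)} 𝓕⁻(𝓕g)(x)`, since `|K|² = |b|/2π`.
What remains is Fourier inversion almost everywhere for integrable `g` with integrable `𝓕g`; it
follows by testing against smooth compactly supported `ψ` and moving `𝓕⁻` and `𝓕` onto the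
Schwartz function `ψ`, for which inversion holds everywhere.
-/

open Real
open scoped FourierTransform SchwartzMap ComplexConjugate

section FourierInversion

variable {V E : Type*} [NormedAddCommGroup V] [InnerProductSpace ℝ V] [FiniteDimensional ℝ V]
  [MeasurableSpace V] [BorelSpace V] [NormedAddCommGroup E] [NormedSpace ℂ E] [CompleteSpace E]

theorem MeasureTheory.Integrable.integral_fourier_smul_eq {f : V → ℂ} {g : V → E}
    (hf : Integrable f) (hg : Integrable g) :
    ∫ ξ, 𝓕 f ξ • g ξ = ∫ x, f x • 𝓕 g x := by
  have h := VectorFourier.integral_fourierIntegral_smul_eq_flip (L := innerₗ V)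
    Real.continuous_fourierChar continuous_inner hf hg
  rwa [flip_innerₗ] at h

theorem MeasureTheory.Integrable.integral_fourierInv_smul_eq {f : V → ℂ} {g : V → E}
    (hf : Integrable f) (hg : Integrable g) :
    ∫ ξ, 𝓕⁻ f ξ • g ξ = ∫ x, f x • 𝓕⁻ g x := by
  have h := VectorFourier.integral_fourierIntegral_smul_eq_flip (L := -innerₗ V)
    Real.continuous_fourierChar continuous_inner.neg hf hg
  rwa [show (-innerₗ V).flip = -innerₗ V from by ext; simp [real_inner_comm]] at h

theorem MeasureTheory.Integrable.fourierInv_fourier_ae_eq {f : V → E}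
    (hf : Integrable f) (hFf : Integrable (𝓕 f)) : 𝓕⁻ (𝓕 f) =ᵐ[volume] f := by
  have hcont : Continuous (𝓕⁻ (𝓕 f)) :=
    VectorFourier.fourierIntegral_continuous Real.continuous_fourierChar continuous_inner.neg hFf
  refine ae_eq_of_integral_contDiff_smul_eq hcont.locallyIntegrable hf.locallyIntegrable
    fun ψ hψ hψc => ?_
  set Φ : 𝓢(V, ℂ) := (hψc.comp_left Complex.ofReal_zero).toSchwartzMap
    (Complex.ofRealCLM.contDiff.comp hψ)
  have hψΦ : ∀ (F : V → E) x, ψ x • F x = Φ x • F x := fun F x => (Complex.coe_smul _ _).symm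
  have hΦ : 𝓕 ⇑(𝓕⁻ Φ : 𝓢(V, ℂ)) = Φ := by
    rw [← SchwartzMap.fourier_coe, FourierInvPair.fourier_fourierInv_eq Φ]
  calc ∫ x, ψ x • 𝓕⁻ (𝓕 f) x = ∫ x, Φ x • 𝓕⁻ (𝓕 f) x := by simp_rw [hψΦ]
    _ = ∫ ξ, (𝓕⁻ Φ : 𝓢(V, ℂ)) ξ • 𝓕 f ξ := by
        rw [← Φ.integrable.integral_fourierInv_smul_eq hFf, ← SchwartzMap.fourierInv_coe]
    _ = ∫ x, Φ x • f x := by rw [← (𝓕⁻ Φ : 𝓢(V, ℂ)).integrable.integral_fourier_smul_eq hf, hΦ]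
    _ = ∫ x, ψ x • f x := by simp_rw [hψΦ]

end FourierInversion

theorem csqrt_mul_conj (z : ℂ) : csqrt z * conj (csqrt z) = ‖z‖ := by
  rw [Complex.mul_conj, Complex.normSq_eq_norm_sq, csqrt,
    show (1 / 2 : ℂ) = ((1 / 2 : ℝ) : ℂ) by push_cast; rfl, Complex.norm_cpow_real,
    ← Real.rpow_natCast, ← Real.rpow_mul (norm_nonneg z)]
  norm_num

theorem Complex.exp_ofReal_mul_I_mul_exp_neg (t : ℝ) : cexp (t * I) * cexp (-t * I) = 1 := by
  rw [← Complex.exp_add, neg_mul, add_neg_cancel, Complex.exp_zero]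

namespace QP

variable (μ : QP)

def chirpX (x : ℝ) : ℝ := μ.a * x ^ 2 + μ.d * x

def chirpW (w : ℝ) : ℝ := μ.c * w ^ 2 + μ.e * w

@[fun_prop]
theorem continuous_chirpX : Continuous μ.chirpX := by unfold chirpX; fun_prop

@[fun_prop]
theorem continuous_chirpW : Continuous μ.chirpW := by unfold chirpW; fun_prop

def normConst : ℂ := csqrt (μ.b * I / (2 * π))

def chirped (f : ℝ → ℂ) (x : ℝ) : ℂ := cexp (↑(-μ.chirpX x) * I) * f x

theorem normConst_mul_conj : μ.normConst * conj μ.normConst = |μ.b| / (2 * π) := by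
  rw [normConst, csqrt_mul_conj, norm_div, norm_mul, Complex.norm_real, Complex.norm_I,
    Complex.norm_mul, Complex.norm_two, Complex.norm_real, Real.norm_eq_abs,
    Real.norm_eq_abs, abs_of_pos Real.pi_pos, mul_one]
  push_cast; ring

theorem normConst_ne_zero (hb : μ.b ≠ 0) : μ.normConst ≠ 0 := by
  rw [normConst, csqrt, Ne, Complex.cpow_eq_zero_iff]
  simp [hb, Real.pi_ne_zero]

theorem QPFT_eq_fourier_chirped (f : ℝ → ℂ) (w : ℝ) :
    QPFT μ f w = μ.normConst * cexp (-μ.chirpW w * I) * 𝓕 (μ.chirped f) (μ.b / (2 * π) * w) := by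
  rw [QPFT, Real.fourier_real_eq_integral_exp_smul, ← integral_const_mul]
  congr 1 with x
  have hphase : -(phase μ x w : ℂ) * I
      = -μ.chirpW w * I + (↑(-2 * π * x * (μ.b / (2 * π) * w)) * I + ↑(-μ.chirpX x) * I) := by
    push_cast [phase, chirpX, chirpW]
    field_simp
    ring
  rw [Λ, hphase, Complex.exp_add, Complex.exp_add, chirped, smul_eq_mul, normConst]
  ring

theorem conj_Λ (x w : ℝ) : conj (Λ μ x w) = conj μ.normConst * cexp (phase μ x w * I) := by
  rw [Λ, map_mul, ← Complex.exp_conj, map_mul, map_neg, Complex.conj_ofReal, Complex.conj_I,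
    normConst]
  ring_nf

theorem integrable_fourier_chirped (hb : μ.b ≠ 0) {f : ℝ → ℂ} (hQf : Integrable (QPFT μ f)) :
    Integrable (𝓕 (μ.chirped f)) := by
  have hr : μ.b / (2 * π) ≠ 0 := div_ne_zero hb (by positivity)
  refine (integrable_comp_mul_left_iff _ hr).1 ?_
  have hunimod : Integrable fun w => μ.normConst⁻¹ * cexp (μ.chirpW w * I) * QPFT μ f w := by
    refine hQf.bdd_mul (c := ‖μ.normConst⁻¹‖) (by fun_prop : Continuous _).aestronglyMeasurable
      (.of_forall fun w => ?_)
    rw [norm_mul, Complex.norm_exp_ofReal_mul_I, mul_one]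
  refine hunimod.congr (.of_forall fun w => ?_)
  dsimp only
  calc μ.normConst⁻¹ * cexp (μ.chirpW w * I) * QPFT μ f w
      = μ.normConst⁻¹ * μ.normConst * (cexp (μ.chirpW w * I) * cexp (-μ.chirpW w * I)) *
          𝓕 (μ.chirped f) (μ.b / (2 * π) * w) := by rw [QPFT_eq_fourier_chirped]; ring
    _ = _ := by
      rw [inv_mul_cancel₀ (μ.normConst_ne_zero hb), Complex.exp_ofReal_mul_I_mul_exp_neg,
        one_mul, one_mul]

theorem QPFT_mul_conj_Λ (f : ℝ → ℂ) (x w : ℝ) :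
    QPFT μ f w * conj (Λ μ x w) = (|μ.b| / (2 * π) : ℝ) * cexp (μ.chirpX x * I) *
      (cexp (↑(2 * π * (μ.b / (2 * π) * w) * x) * I) * 𝓕 (μ.chirped f) (μ.b / (2 * π) * w)) := by
  have hphase : -(μ.chirpW w : ℂ) * I + phase μ x w * I
      = μ.chirpX x * I + ↑(2 * π * (μ.b / (2 * π) * w) * x) * I := by
    push_cast [phase, chirpX, chirpW]
    field_simp
    ring
  have hexp := congrArg cexp hphase
  rw [Complex.exp_add, Complex.exp_add] at hexp
  calc QPFT μ f w * conj (Λ μ x w)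
      = μ.normConst * conj μ.normConst * (cexp (-μ.chirpW w * I) * cexp (phase μ x w * I)) *
          𝓕 (μ.chirped f) (μ.b / (2 * π) * w) := by
        rw [QPFT_eq_fourier_chirped, conj_Λ]; ring
    _ = _ := by rw [normConst_mul_conj, hexp]; push_cast; ring

theorem integral_QPFT_mul_conj_Λ (hb : μ.b ≠ 0) (f : ℝ → ℂ) (x : ℝ) :
    ∫ w, QPFT μ f w * conj (Λ μ x w) = cexp (μ.chirpX x * I) * 𝓕⁻ (𝓕 (μ.chirped f)) x := by
  have hinv : ∫ ξ, cexp (↑(2 * π * ξ * x) * I) * 𝓕 (μ.chirped f) ξ = 𝓕⁻ (𝓕 (μ.chirped f)) x := by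
    rw [Real.fourierInv_eq']
    simp_rw [Real.inner_apply, smul_eq_mul, mul_assoc]
  have hscale : ((|μ.b| / (2 * π) : ℝ) : ℂ) * (|(μ.b / (2 * π))⁻¹| : ℝ) = 1 := by
    rw [← Complex.ofReal_mul, abs_inv, abs_div, abs_of_pos Real.two_pi_pos,
      mul_inv_cancel₀ (by positivity), Complex.ofReal_one]
  simp_rw [μ.QPFT_mul_conj_Λ f x, integral_const_mul, Measure.integral_comp_mul_left
    (fun ξ => cexp (↑(2 * π * ξ * x) * I) * 𝓕 (μ.chirped f) ξ), hinv, Complex.real_smul]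
  linear_combination cexp (μ.chirpX x * I) * 𝓕⁻ (𝓕 (μ.chirped f)) x * hscale

end QP

theorem qpft_inversion_general (μ : QP) (hb : μ.b ≠ 0) (f : ℝ → ℂ)
    (hf1 : Integrable f)
    (hQf : Integrable (QPFT μ f)) :
    ∀ᵐ x : ℝ, f x = ∫ w : ℝ, QPFT μ f w * (starRingEnd ℂ) (Λ μ x w) := by
  have hg : Integrable (μ.chirped f) :=
    hf1.bdd_mul (c := 1) (by fun_prop : Continuous _).aestronglyMeasurable
      (.of_forall fun x => (Complex.norm_exp_ofReal_mul_I _).le)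
  filter_upwards [hg.fourierInv_fourier_ae_eq (μ.integrable_fourier_chirped hb hQf)] with x hx
  rw [μ.integral_QPFT_mul_conj_Λ hb, hx, QP.chirped, ← mul_assoc, Complex.ofReal_neg,
    Complex.exp_ofReal_mul_I_mul_exp_neg, one_mul]

/-- Inversion formula for the one-dimensional QPFT:
`f(x) = ∫ Q_μ[f](w) conj(Λ_μ(x,w)) dw` a.e. -/
theorem qpft_inversion (μ : QP) (hb : μ.b ≠ 0) (f : ℝ → ℂ)
    (hf1 : Integrable f) (hf2 : MemLp f 2 volume)
    (hQf : Integrable (QPFT μ f)) :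
    ∀ᵐ x : ℝ, f x = ∫ w : ℝ, QPFT μ f w * (starRingEnd ℂ) (Λ μ x w) :=
  qpft_inversion_general μ hb f hf1 hQf
end
end

section
/- Shift property of the Q-QPFT: for f ∈ L¹(ℝ²,ℍ) and k = (k₁,k₂) ∈ ℝ², Q^ℍ_{μ₁,μ₂}[f(·-k)](w) = e^{-iφ₁(w₁,k₁)} · Q^ℍ_{μ₁,μ₂}[f](w₁ + 2(a₁/b₁)k₁, w₂ + 2(a₂/b₂)k₂) · e^{-jφ₂(w₂,k₂)}, where φ_s(w_s,k_s) = a_s k_s² + d_s k_s + b_s k_s w_s - 4(a_s²c_s/b_s²)k_s² - 4(a_s/b_s)c_s w_s k_s - 2(a_s e_s/b_s)k_s for s = 1, 2. -/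
open MeasureTheory Complex
open scoped ENNReal

noncomputable section

abbrev ℍ := Quaternion ℝ

/-- Embedding of ℂ into ℍ along the i-axis. -/
def Ci (z : ℂ) : ℍ := ⟨z.re, z.im, 0, 0⟩
/-- Embedding of ℂ into ℍ along the j-axis. -/
def Cj (z : ℂ) : ℍ := ⟨z.re, 0, z.im, 0⟩

/-- quaternion exponential e^{iθ} -/
def expi (θ : ℝ) : ℍ := Ci (Complex.exp (θ * Complex.I))
/-- quaternion exponential e^{jθ} -/
def expj (θ : ℝ) : ℍ := Cj (Complex.exp (θ * Complex.I))

/-- left quadratic-phase kernel Λ^i_{μ}(x,w) -/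
def kerI (μ : QP) (x w : ℝ) : ℍ :=
  Ci (csqrt (μ.b * Complex.I / (2 * Real.pi))) * expi (-(phase μ x w))

/-- right quadratic-phase kernel Λ^j_{μ}(x,w) -/
def kerJ (μ : QP) (x w : ℝ) : ℍ :=
  Cj (csqrt (μ.b * Complex.I / (2 * Real.pi))) * expj (-(phase μ x w))

/-- two-sided quaternion quadratic-phase Fourier transform -/
def QQPFT (μ₁ μ₂ : QP) (f : ℝ × ℝ → ℍ) (w : ℝ × ℝ) : ℍ :=
  ∫ x : ℝ × ℝ, kerI μ₁ x.1 w.1 * f x * kerJ μ₂ x.2 w.2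

/-- two-sided quaternion Fourier transform -/
def QFT (f : ℝ × ℝ → ℍ) (w : ℝ × ℝ) : ℍ :=
  (1 / (2 * Real.pi)) • ∫ x : ℝ × ℝ, expi (-(x.1 * w.1)) * f x * expj (-(x.2 * w.2))



/-!
Substituting `x ↦ x + k` and completing the square in each phase turns the shift of `x_s` into
a shift of `w_s` by `2 (a_s/b_s) k_s` times a phase factor independent of `x`. The `i`-factors
commute with each other, so the first phase factor moves to the far left past the constant of
`Λ^i`; the second already stands at the far right.
-/

/-- The phase `φ_s(w_s, k_s)` of the shift theorem. -/
def QP.shiftPhase (μ : QP) (k w : ℝ) : ℝ :=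
  μ.a * k^2 + μ.d * k + μ.b * k * w
    - 4 * (μ.a^2 * μ.c / μ.b^2) * k^2
    - 4 * (μ.a / μ.b) * μ.c * w * k
    - 2 * (μ.a * μ.e / μ.b) * k

lemma phase_add_left (μ : QP) (hb : μ.b ≠ 0) (x k w : ℝ) :
    phase μ (x + k) w = μ.shiftPhase k w + phase μ x (w + 2 * (μ.a / μ.b) * k) := by
  unfold phase QP.shiftPhase
  field_simp
  ring

lemma Ci_mul (z w : ℂ) : Ci (z * w) = Ci z * Ci w := by
  ext <;>
    simp only [Quaternion.re_mul, Quaternion.imI_mul, Quaternion.imJ_mul, Quaternion.imK_mul] <;>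
    simp [Ci]

lemma Cj_mul (z w : ℂ) : Cj (z * w) = Cj z * Cj w := by
  ext <;>
    simp only [Quaternion.re_mul, Quaternion.imI_mul, Quaternion.imJ_mul, Quaternion.imK_mul] <;>
    simp [Cj]

lemma Ci_mul_comm (z w : ℂ) : Ci z * Ci w = Ci w * Ci z := by
  rw [← Ci_mul, mul_comm, Ci_mul]

lemma expi_add (s t : ℝ) : expi (s + t) = expi s * expi t := by
  rw [expi, expi, expi, ← Ci_mul, ← Complex.exp_add]
  push_cast
  ring_nf

lemma expj_add (s t : ℝ) : expj (s + t) = expj s * expj t := by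
  rw [expj, expj, expj, ← Cj_mul, ← Complex.exp_add]
  push_cast
  ring_nf

lemma kerI_add_left (μ : QP) (hb : μ.b ≠ 0) (x k w : ℝ) :
    kerI μ (x + k) w = expi (-μ.shiftPhase k w) * kerI μ x (w + 2 * (μ.a / μ.b) * k) := by
  rw [kerI, kerI, phase_add_left μ hb, neg_add, expi_add, ← mul_assoc, expi, expi,
    Ci_mul_comm, mul_assoc]

lemma kerJ_add_left (μ : QP) (hb : μ.b ≠ 0) (x k w : ℝ) :
    kerJ μ (x + k) w = kerJ μ x (w + 2 * (μ.a / μ.b) * k) * expj (-μ.shiftPhase k w) := by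
  rw [kerJ, kerJ, phase_add_left μ hb, add_comm, neg_add, expj_add, ← mul_assoc]

lemma integral_const_mul_mul_const {X A : Type*} [MeasurableSpace X] {ν : Measure X}
    [NormedDivisionRing A] [NormedAlgebra ℝ A] (a b : A) (f : X → A) :
    ∫ x, a * f x * b ∂ν = a * (∫ x, f x ∂ν) * b := by
  have hleft : ∫ x, a * f x ∂ν = a * ∫ x, f x ∂ν := integral_smul a f
  rw [← hleft]
  by_cases hf : Integrable (fun x => a * f x) ν
  · exact integral_mul_const_of_integrable hf
  -- otherwise both integrals are junk zeros: `· * b` preserves non-integrability for `b ≠ 0`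
  rcases eq_or_ne b 0 with rfl | hb
  · simp
  rw [integral_undef hf, integral_undef ((integrable_mul_const_iff hb.isUnit _).not.mpr hf),
    zero_mul]

lemma QQPFT_comp_sub (μ₁ μ₂ : QP) (f : ℝ × ℝ → ℍ) (k w : ℝ × ℝ) :
    QQPFT μ₁ μ₂ (fun x => f (x - k)) w
      = ∫ y : ℝ × ℝ, kerI μ₁ (y.1 + k.1) w.1 * f y * kerJ μ₂ (y.2 + k.2) w.2 := by
  rw [QQPFT]
  conv_rhs => rw [← integral_sub_right_eq_self _ k]
  simp

theorem qqpft_shift_general (μ₁ μ₂ : QP) (hb₁ : μ₁.b ≠ 0) (hb₂ : μ₂.b ≠ 0)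
    (f : ℝ × ℝ → ℍ) (k : ℝ × ℝ) (w : ℝ × ℝ) :
    QQPFT μ₁ μ₂ (fun x => f (x.1 - k.1, x.2 - k.2)) w
      = expi (-(μ₁.a * k.1^2 + μ₁.d * k.1 + μ₁.b * k.1 * w.1
            - 4 * (μ₁.a^2 * μ₁.c / μ₁.b^2) * k.1^2
            - 4 * (μ₁.a / μ₁.b) * μ₁.c * w.1 * k.1
            - 2 * (μ₁.a * μ₁.e / μ₁.b) * k.1)) *
          QQPFT μ₁ μ₂ f (w.1 + 2 * (μ₁.a / μ₁.b) * k.1, w.2 + 2 * (μ₂.a / μ₂.b) * k.2) *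
          expj (-(μ₂.a * k.2^2 + μ₂.d * k.2 + μ₂.b * k.2 * w.2
            - 4 * (μ₂.a^2 * μ₂.c / μ₂.b^2) * k.2^2
            - 4 * (μ₂.a / μ₂.b) * μ₂.c * w.2 * k.2
            - 2 * (μ₂.a * μ₂.e / μ₂.b) * k.2)) := by
  change QQPFT μ₁ μ₂ (fun x => f (x - k)) w
    = expi (-μ₁.shiftPhase k.1 w.1) * QQPFT μ₁ μ₂ f _ * expj (-μ₂.shiftPhase k.2 w.2)
  rw [QQPFT_comp_sub, QQPFT, ← integral_const_mul_mul_const]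
  congr 1
  funext y
  rw [kerI_add_left μ₁ hb₁, kerJ_add_left μ₂ hb₂]
  simp only [mul_assoc]

/-- Shift property of the two-sided Q-QPFT. -/
theorem qqpft_shift (μ₁ μ₂ : QP) (hb₁ : μ₁.b ≠ 0) (hb₂ : μ₂.b ≠ 0)
    (f : ℝ × ℝ → ℍ) (hf : Integrable f) (k : ℝ × ℝ) (w : ℝ × ℝ) :
    QQPFT μ₁ μ₂ (fun x => f (x.1 - k.1, x.2 - k.2)) w
      = expi (-(μ₁.a * k.1^2 + μ₁.d * k.1 + μ₁.b * k.1 * w.1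
            - 4 * (μ₁.a^2 * μ₁.c / μ₁.b^2) * k.1^2
            - 4 * (μ₁.a / μ₁.b) * μ₁.c * w.1 * k.1
            - 2 * (μ₁.a * μ₁.e / μ₁.b) * k.1)) *
          QQPFT μ₁ μ₂ f (w.1 + 2 * (μ₁.a / μ₁.b) * k.1, w.2 + 2 * (μ₂.a / μ₂.b) * k.2) *
          expj (-(μ₂.a * k.2^2 + μ₂.d * k.2 + μ₂.b * k.2 * w.2
            - 4 * (μ₂.a^2 * μ₂.c / μ₂.b^2) * k.2^2
            - 4 * (μ₂.a / μ₂.b) * μ₂.c * w.2 * k.2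
            - 2 * (μ₂.a * μ₂.e / μ₂.b) * k.2)) :=
  qqpft_shift_general μ₁ μ₂ hb₁ hb₂ f k w
end
end
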